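/- Let f : U → X be a G-equivariant open immersion of k-schemes. Then the induced morphism Fix_G(f) : Fix_G(U) → Fix_G(X) is an open immersion. -/

import Mathlib

/-!
For a monomorphism `f`, equivariance makes the square with top `id_G ×ₖ f : G ×ₖ U ⟶ G ×ₖ X`,
bottom `f ×ₖ f : U ×ₖ U ⟶ X ×ₖ X` and vertical maps `(m, pr₂)` cartesian: if `(g, x)` satisfies
`(g x, x) = (f u₁, f u₂)`, then `f (g u₂) = g x = f u₁`, so `g u₂ = u₁`. Pasting it with the
square defining `Fix_G(U)` and cancelling the one defining `Fix_G(X)` gives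
`Fix_G(U) = Fix_G(X) ×_X U`, so `Fix_G(f)` is a base change of `f`.
-/

open CategoryTheory CategoryTheory.Limits AlgebraicGeometry

noncomputable section
namespace Paper
universe u
variable (k : CommRingCat.{u})
variable {G X U : Scheme.{u}}

/-- The morphism `(m, pr₂) : G ×ₖ X ⟶ X ×ₖ X`. -/
def actionPair (sG : G ⟶ Spec k) (sX : X ⟶ Spec k) (m : pullback sG sX ⟶ X)
    (hm : m ≫ sX = pullback.snd sG sX ≫ sX) : pullback sG sX ⟶ pullback sX sX :=
  pullback.lift m (pullback.snd sG sX) hm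

/-- The fixed-point scheme `Fix_G(X)`. -/
def Fix (sG : G ⟶ Spec k) (sX : X ⟶ Spec k) (m : pullback sG sX ⟶ X)
    (hm : m ≫ sX = pullback.snd sG sX ≫ sX) : Scheme :=
  pullback (actionPair k sG sX m hm) (pullback.diagonal sX)

/-- The canonical projection `Fix_G(X) ⟶ G ×ₖ X`. -/
def fixToProd (sG : G ⟶ Spec k) (sX : X ⟶ Spec k) (m : pullback sG sX ⟶ X)
    (hm : m ≫ sX = pullback.snd sG sX ≫ sX) :
    Fix k sG sX m hm ⟶ pullback sG sX :=
  pullback.fst (actionPair k sG sX m hm) (pullback.diagonal sX)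

/-- The canonical projection `Fix_G(X) ⟶ X`. -/
def fixToBase (sG : G ⟶ Spec k) (sX : X ⟶ Spec k) (m : pullback sG sX ⟶ X)
    (hm : m ≫ sX = pullback.snd sG sX ≫ sX) :
    Fix k sG sX m hm ⟶ X :=
  pullback.snd (actionPair k sG sX m hm) (pullback.diagonal sX)

/-- `id_G ×ₖ f : G ×ₖ U ⟶ G ×ₖ X`. -/
def prodMap (sG : G ⟶ Spec k) (sU : U ⟶ Spec k) (sX : X ⟶ Spec k)
    (f : U ⟶ X) (hf : f ≫ sX = sU) : pullback sG sU ⟶ pullback sG sX :=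
  pullback.map sG sU sG sX (𝟙 G) f (𝟙 (Spec k)) (by simp) (by simp [hf])

theorem fixMap_w (sG : G ⟶ Spec k) (sU : U ⟶ Spec k) (sX : X ⟶ Spec k)
    (mU : pullback sG sU ⟶ U) (hmU : mU ≫ sU = pullback.snd sG sU ≫ sU)
    (mX : pullback sG sX ⟶ X) (hmX : mX ≫ sX = pullback.snd sG sX ≫ sX)
    (f : U ⟶ X) (hf : f ≫ sX = sU)
    (heq : prodMap k sG sU sX f hf ≫ mX = mU ≫ f) :
    (fixToProd k sG sU mU hmU ≫ prodMap k sG sU sX f hf) ≫ actionPair k sG sX mX hmX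
      = (fixToBase k sG sU mU hmU ≫ f) ≫ pullback.diagonal sX := by
  have h1 : fixToProd k sG sU mU hmU ≫ mU = fixToBase k sG sU mU hmU := by
    have hc : fixToProd k sG sU mU hmU ≫ actionPair k sG sU mU hmU
        = fixToBase k sG sU mU hmU ≫ pullback.diagonal sU := pullback.condition
    have := congrArg (· ≫ pullback.fst sU sU) hc
    simp only [actionPair, Category.assoc] at this
    rw [pullback.lift_fst, pullback.diagonal_fst, Category.comp_id] at this
    exact this
  have h2 : fixToProd k sG sU mU hmU ≫ pullback.snd sG sU = fixToBase k sG sU mU hmU := by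
    have hc : fixToProd k sG sU mU hmU ≫ actionPair k sG sU mU hmU
        = fixToBase k sG sU mU hmU ≫ pullback.diagonal sU := pullback.condition
    have := congrArg (· ≫ pullback.snd sU sU) hc
    simp only [actionPair, Category.assoc] at this
    rw [pullback.lift_snd, pullback.diagonal_snd, Category.comp_id] at this
    exact this
  apply pullback.hom_ext
  · simp only [Category.assoc, actionPair, pullback.lift_fst, pullback.diagonal_fst,
      Category.comp_id]
    rw [heq, ← Category.assoc, h1]
  · simp only [Category.assoc, actionPair, pullback.lift_snd, pullback.diagonal_snd,
      Category.comp_id]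
    rw [show prodMap k sG sU sX f hf ≫ pullback.snd sG sX = pullback.snd sG sU ≫ f from by
      exact pullback.lift_snd _ _ _]
    rw [← Category.assoc, h2]

/-- The induced morphism `Fix_G(f) : Fix_G(U) ⟶ Fix_G(X)`. -/
def fixMap (sG : G ⟶ Spec k) (sU : U ⟶ Spec k) (sX : X ⟶ Spec k)
    (mU : pullback sG sU ⟶ U) (hmU : mU ≫ sU = pullback.snd sG sU ≫ sU)
    (mX : pullback sG sX ⟶ X) (hmX : mX ≫ sX = pullback.snd sG sX ≫ sX)
    (f : U ⟶ X) (hf : f ≫ sX = sU)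
    (heq : prodMap k sG sU sX f hf ≫ mX = mU ≫ f) :
    Fix k sG sU mU hmU ⟶ Fix k sG sX mX hmX :=
  pullback.lift (fixToProd k sG sU mU hmU ≫ prodMap k sG sU sX f hf)
    (fixToBase k sG sU mU hmU ≫ f)
    (fixMap_w k sG sU sX mU hmU mX hmX f hf heq)

section

variable {k} (sG : G ⟶ Spec k) (sU : U ⟶ Spec k) (sX : X ⟶ Spec k)
  (mU : pullback sG sU ⟶ U) (hmU : mU ≫ sU = pullback.snd sG sU ≫ sU)
  (mX : pullback sG sX ⟶ X) (hmX : mX ≫ sX = pullback.snd sG sX ≫ sX)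
  (f : U ⟶ X) (hf : f ≫ sX = sU)

lemma actionPair_fst : actionPair k sG sX mX hmX ≫ pullback.fst sX sX = mX :=
  pullback.lift_fst _ _ _

lemma actionPair_snd : actionPair k sG sX mX hmX ≫ pullback.snd sX sX = pullback.snd sG sX :=
  pullback.lift_snd _ _ _

lemma prodMap_fst : prodMap k sG sU sX f hf ≫ pullback.fst sG sX = pullback.fst sG sU :=
  (pullback.lift_fst _ _ _).trans (Category.comp_id _)

lemma prodMap_snd : prodMap k sG sU sX f hf ≫ pullback.snd sG sX = pullback.snd sG sU ≫ f :=
  pullback.lift_snd _ _ _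

def prodSelfMap : pullback sU sU ⟶ pullback sX sX :=
  pullback.map sU sU sX sX f f (𝟙 _) (by simp [hf]) (by simp [hf])

@[simp]
lemma prodSelfMap_fst : prodSelfMap sU sX f hf ≫ pullback.fst sX sX = pullback.fst sU sU ≫ f :=
  pullback.lift_fst _ _ _

@[simp]
lemma prodSelfMap_snd : prodSelfMap sU sX f hf ≫ pullback.snd sX sX = pullback.snd sU sU ≫ f :=
  pullback.lift_snd _ _ _

lemma diagonal_comp_prodSelfMap :
    pullback.diagonal sU ≫ prodSelfMap sU sX f hf = f ≫ pullback.diagonal sX := by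
  ext <;> simp

lemma isPullback_prodMap_actionPair (heq : prodMap k sG sU sX f hf ≫ mX = mU ≫ f) [Mono f] :
    IsPullback (prodMap k sG sU sX f hf) (actionPair k sG sU mU hmU)
      (actionPair k sG sX mX hmX) (prodSelfMap sU sX f hf) := by
  have hcomm : prodMap k sG sU sX f hf ≫ actionPair k sG sX mX hmX
      = actionPair k sG sU mU hmU ≫ prodSelfMap sU sX f hf := by
    apply pullback.hom_ext
    · rw [Category.assoc, Category.assoc, actionPair_fst, prodSelfMap_fst,
        reassoc_of% actionPair_fst, heq]
    · rw [Category.assoc, Category.assoc, actionPair_snd, prodSelfMap_snd,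
        reassoc_of% actionPair_snd, prodMap_snd]
  have components {T : Scheme.{u}} {a : T ⟶ pullback sG sX} {b : T ⟶ pullback sU sU}
      (h : a ≫ actionPair k sG sX mX hmX = b ≫ prodSelfMap sU sX f hf) :
      a ≫ mX = b ≫ pullback.fst sU sU ≫ f ∧
        a ≫ pullback.snd sG sX = b ≫ pullback.snd sU sU ≫ f := by
    constructor
    · simpa only [Category.assoc, actionPair_fst, prodSelfMap_fst] using h =≫ pullback.fst _ _
    · simpa only [Category.assoc, actionPair_snd, prodSelfMap_snd] using h =≫ pullback.snd _ _
  refine IsPullback.mk' hcomm (fun T φ φ' h₁ h₂ => ?_) (fun T a b h => ?_)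
  · apply pullback.hom_ext
    · simpa only [Category.assoc, prodMap_fst] using h₁ =≫ pullback.fst sG sX
    · simpa only [Category.assoc, actionPair_snd] using h₂ =≫ pullback.snd sU sU
  obtain ⟨ha_fst, ha_snd⟩ := components h
  let l : T ⟶ pullback sG sU := pullback.lift (a ≫ pullback.fst sG sX) (b ≫ pullback.snd sU sU)
    (by simp only [Category.assoc, pullback.condition, reassoc_of% ha_snd, hf])
  have hl : l ≫ prodMap k sG sU sX f hf = a := by
    apply pullback.hom_ext
    · rw [Category.assoc, prodMap_fst, pullback.lift_fst]
    · rw [Category.assoc, prodMap_snd, pullback.lift_snd_assoc, ha_snd, Category.assoc]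
  refine ⟨l, hl, pullback.hom_ext ?_ ?_⟩
  · rw [Category.assoc, actionPair_fst, ← cancel_mono f, Category.assoc, ← heq, reassoc_of% hl,
      ha_fst, Category.assoc]
  · rw [Category.assoc, actionPair_snd, pullback.lift_snd]

lemma fixMap_fixToProd (heq : prodMap k sG sU sX f hf ≫ mX = mU ≫ f) :
    fixMap k sG sU sX mU hmU mX hmX f hf heq ≫ fixToProd k sG sX mX hmX
      = fixToProd k sG sU mU hmU ≫ prodMap k sG sU sX f hf :=
  pullback.lift_fst _ _ _

lemma fixMap_fixToBase (heq : prodMap k sG sU sX f hf ≫ mX = mU ≫ f) :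
    fixMap k sG sU sX mU hmU mX hmX f hf heq ≫ fixToBase k sG sX mX hmX
      = fixToBase k sG sU mU hmU ≫ f :=
  pullback.lift_snd _ _ _

lemma isPullback_fixMap (heq : prodMap k sG sU sX f hf ≫ mX = mU ≫ f) [Mono f] :
    IsPullback (fixMap k sG sU sX mU hmU mX hmX f hf heq) (fixToBase k sG sU mU hmU)
      (fixToBase k sG sX mX hmX) f := by
  have hFixU : IsPullback (fixToProd k sG sU mU hmU) (fixToBase k sG sU mU hmU)
      (actionPair k sG sU mU hmU) (pullback.diagonal sU) := IsPullback.of_hasPullback _ _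
  have hFixX : IsPullback (fixToProd k sG sX mX hmX) (fixToBase k sG sX mX hmX)
      (actionPair k sG sX mX hmX) (pullback.diagonal sX) := IsPullback.of_hasPullback _ _
  have hpaste := hFixU.paste_horiz (isPullback_prodMap_actionPair sG sU sX mU hmU mX hmX f hf heq)
  rw [diagonal_comp_prodSelfMap] at hpaste
  refine IsPullback.of_right ?_ (fixMap_fixToBase sG sU sX mU hmU mX hmX f hf heq) hFixX
  rwa [fixMap_fixToProd]

end

/-- If `f : U ⟶ X` is a `G`-equivariant open immersion of `k`-schemes, then
the induced morphism `Fix_G(f) : Fix_G(U) ⟶ Fix_G(X)` is an open immersion. -/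
theorem statement1 (sG : G ⟶ Spec k) (sU : U ⟶ Spec k) (sX : X ⟶ Spec k)
    (mU : pullback sG sU ⟶ U) (hmU : mU ≫ sU = pullback.snd sG sU ≫ sU)
    (mX : pullback sG sX ⟶ X) (hmX : mX ≫ sX = pullback.snd sG sX ≫ sX)
    (f : U ⟶ X) (hf : f ≫ sX = sU)
    (heq : prodMap k sG sU sX f hf ≫ mX = mU ≫ f)
    [IsOpenImmersion f] :
    IsOpenImmersion (fixMap k sG sU sX mU hmU mX hmX f hf heq) :=
  MorphismProperty.of_isPullback (isPullback_fixMap sG sU sX mU hmU mX hmX f hf heq).flip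
    inferInstance

end Paper
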